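/- arXiv:1509.06218 — 2 statements merged into one kernel-verified Lean document; each statement's English description precedes it below -/
import Mathlib

section
/- Assume the total mass equation Σ_{α=1}^N ∂_t h_α + Σ_{α=1}^N ∂_x(h_α u_α) = 0 and, for each α = 1,…,N, the layer momentum equation ∂_t(h_α u_α) + ∂_x( h_α u_α² + h_α p_α ) = u_{α+1/2} G_{α+1/2} − u_{α−1/2} G_{α−1/2} + p_{α+1/2} ∂_x z_{α+1/2} − p_{α−1/2} ∂_x z_{α−1/2}, where u_{α±1/2} are given smooth functions. Then each layer satisfies the energy balance ∂_t E_α + ∂_x( u_α (E_α + h_α p_α) ) = ( u_{α+1/2} u_α − u_α²/2 + p_{α+1/2} + g z_{α+1/2} ) G_{α+1/2} − ( u_{α−1/2} u_α − u_α²/2 + p_{α−1/2} + g z_{α−1/2} ) G_{α−1/2} − p_{α+1/2} ∂_t z_{α+1/2} + p_{α−1/2} ∂_t z_{α−1/2}, where E_α = h_α( u_α²/2 + g z_α ). -/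
/-- ∂/∂x of a function of (x,t). -/
noncomputable def pdx (f : ℝ → ℝ → ℝ) (x t : ℝ) : ℝ := deriv (fun x' => f x' t) x

/-- ∂/∂t of a function of (x,t). -/
noncomputable def pdt (f : ℝ → ℝ → ℝ) (x t : ℝ) : ℝ := deriv (fun t' => f x t') t

/-- Layer thickness `h_α = l_α H`. -/
noncomputable def hh (H : ℝ → ℝ → ℝ) (l : ℕ → ℝ) (α : ℕ) (x t : ℝ) : ℝ := l α * H x t

/-- Interface heights `z_{α+1/2} = z_b + Σ_{j=1}^α l_j H`. -/
noncomputable def zhalf (zb : ℝ → ℝ) (H : ℝ → ℝ → ℝ) (l : ℕ → ℝ) (α : ℕ) (x t : ℝ) : ℝ :=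
  zb x + ∑ j ∈ Finset.Icc 1 α, l j * H x t

/-- Layer midpoints `z_α = (z_{α+1/2} + z_{α−1/2})/2`. -/
noncomputable def zc (zb : ℝ → ℝ) (H : ℝ → ℝ → ℝ) (l : ℕ → ℝ) (α : ℕ) (x t : ℝ) : ℝ :=
  (zhalf zb H l α x t + zhalf zb H l (α - 1) x t) / 2

/-- Mass exchange terms `G_{α+1/2} = ∂_t Σ_{j=1}^α h_j + ∂_x Σ_{j=1}^α h_j u_j`
(index `α` denotes `α+1/2`). -/
noncomputable def Gex (H : ℝ → ℝ → ℝ) (l : ℕ → ℝ) (u : ℕ → ℝ → ℝ → ℝ) (α : ℕ) (x t : ℝ) : ℝ :=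
  deriv (fun t' => ∑ j ∈ Finset.Icc 1 α, hh H l j x t') t
    + deriv (fun x' => ∑ j ∈ Finset.Icc 1 α, hh H l j x' t * u j x' t) x

/-- Layer pressures `p_α = g(h_α/2 + Σ_{j=α+1}^N h_j)`. -/
noncomputable def player (H : ℝ → ℝ → ℝ) (l : ℕ → ℝ) (g : ℝ) (N α : ℕ) (x t : ℝ) : ℝ :=
  g * (hh H l α x t / 2 + ∑ j ∈ Finset.Icc (α + 1) N, hh H l j x t)

/-- Interface pressures `p_{α+1/2} = g Σ_{j=α+1}^N h_j` (index `α` denotes `α+1/2`). -/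
noncomputable def phalf (H : ℝ → ℝ → ℝ) (l : ℕ → ℝ) (g : ℝ) (N α : ℕ) (x t : ℝ) : ℝ :=
  g * ∑ j ∈ Finset.Icc (α + 1) N, hh H l j x t

open Finset

/-!
The layer mass balance `G_{α+1/2} − G_{α−1/2} = ∂_t h_α + ∂_x(h_α u_α)` is the difference
of consecutive partial sums in the definition of `G`. The layer is hydrostatic:
`z_{α+1/2} = z_{α−1/2} + h_α` and `p_{α−1/2} = p_{α+1/2} + g h_α`, so `p + g z` takes the
same value on both interfaces. With these relations the energy balance is `u_α` times the
momentum equation minus `(p_{α+1/2} + g z_{α+1/2} − u_α²/2)` times the mass balance, a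
pointwise identity between first derivatives.
-/

lemma Differentiable.differentiableAt_slice_fst {f : ℝ → ℝ → ℝ}
    (hf : Differentiable ℝ (fun q : ℝ × ℝ => f q.1 q.2)) (x t : ℝ) :
    DifferentiableAt ℝ (fun x' => f x' t) x :=
  (hf (x, t)).comp (f := fun x' => (x', t)) x
    (differentiableAt_id.prodMk (differentiableAt_const t))

lemma Differentiable.differentiableAt_slice_snd {f : ℝ → ℝ → ℝ}
    (hf : Differentiable ℝ (fun q : ℝ × ℝ => f q.1 q.2)) (x t : ℝ) :
    DifferentiableAt ℝ (fun t' => f x t') t :=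
  (hf (x, t)).comp (f := fun t' => (x, t')) t
    ((differentiableAt_const x).prodMk differentiableAt_id)

lemma deriv_sum_Icc_succ_sub {f : ℕ → ℝ → ℝ} {s : ℝ} (n : ℕ)
    (hf : ∀ j ∈ Icc 1 (n + 1), DifferentiableAt ℝ (f j) s) :
    deriv (fun s' => ∑ j ∈ Icc 1 (n + 1), f j s') s - deriv (fun s' => ∑ j ∈ Icc 1 n, f j s') s
      = deriv (f (n + 1)) s := by
  have hsum : DifferentiableAt ℝ (fun s' => ∑ j ∈ Icc 1 n, f j s') s :=
    DifferentiableAt.fun_sum fun j hj => hf j (Icc_subset_Icc_right n.le_succ hj)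
  simp only [sum_Icc_succ_top (Nat.le_add_left 1 n)]
  rw [deriv_fun_add hsum (hf _ (right_mem_Icc.mpr (Nat.le_add_left 1 n)))]
  ring

theorem layer_energy_balance {g x t uTop uBot GTop GBot : ℝ}
    {h u zBot zTop zMid p pBot pTop : ℝ → ℝ → ℝ}
    (hzTop : ∀ x t, zTop x t = zBot x t + h x t)
    (hzMid : ∀ x t, zMid x t = zBot x t + h x t / 2)
    (hp : ∀ x t, p x t = pTop x t + g * h x t / 2)
    (hpBot : ∀ x t, pBot x t = pTop x t + g * h x t)
    (hhx : DifferentiableAt ℝ (fun x' => h x' t) x)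
    (hht : DifferentiableAt ℝ (fun t' => h x t') t)
    (hux : DifferentiableAt ℝ (fun x' => u x' t) x)
    (hut : DifferentiableAt ℝ (fun t' => u x t') t)
    (hzx : DifferentiableAt ℝ (fun x' => zBot x' t) x)
    (hzt : DifferentiableAt ℝ (fun t' => zBot x t') t)
    (hpx : DifferentiableAt ℝ (fun x' => pTop x' t) x)
    (hmass : GTop - GBot = pdt h x t + pdx (fun x' t' => h x' t' * u x' t') x t)
    (hmom : pdt (fun x' t' => h x' t' * u x' t') x t
        + pdx (fun x' t' => h x' t' * (u x' t') ^ 2 + h x' t' * p x' t') x t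
      = uTop * GTop - uBot * GBot + pTop x t * pdx zTop x t - pBot x t * pdx zBot x t) :
    pdt (fun x' t' => h x' t' * ((u x' t') ^ 2 / 2 + g * zMid x' t')) x t
        + pdx (fun x' t' => u x' t'
            * (h x' t' * ((u x' t') ^ 2 / 2 + g * zMid x' t') + h x' t' * p x' t')) x t
      = (uTop * u x t - (u x t) ^ 2 / 2 + pTop x t + g * zTop x t) * GTop
        - (uBot * u x t - (u x t) ^ 2 / 2 + pBot x t + g * zBot x t) * GBot
        - pTop x t * pdt zTop x t + pBot x t * pdt zBot x t := by
  simp only [pdt, pdx, hzTop, hzMid, hp, hpBot] at hmass hmom ⊢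
  simp (disch := fun_prop) only [deriv_fun_add, deriv_fun_mul, deriv_fun_pow, deriv_div_const,
    deriv_const] at hmom hmass ⊢
  linear_combination u x t * hmom
    - (pTop x t + g * (zBot x t + h x t) - u x t ^ 2 / 2) * hmass

section Layers

variable {zb : ℝ → ℝ} {H : ℝ → ℝ → ℝ} {l : ℕ → ℝ} {u : ℕ → ℝ → ℝ → ℝ} {g : ℝ} {N : ℕ}

lemma Gex_succ_sub {x t : ℝ} (hHx : DifferentiableAt ℝ (fun x' => H x' t) x)
    (hHt : DifferentiableAt ℝ (fun t' => H x t') t)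
    (hux : ∀ j, DifferentiableAt ℝ (fun x' => u j x' t) x) (α : ℕ) :
    Gex H l u (α + 1) x t - Gex H l u α x t
      = pdt (hh H l (α + 1)) x t
        + pdx (fun x' t' => hh H l (α + 1) x' t' * u (α + 1) x' t') x t := by
  have ht := deriv_sum_Icc_succ_sub (f := fun j t' => hh H l j x t') α
    fun j _ => hHt.const_mul (l j)
  have hx := deriv_sum_Icc_succ_sub (f := fun j x' => hh H l j x' t * u j x' t) α
    fun j _ => (hHx.const_mul (l j)).mul (hux j)
  rw [Gex, Gex, pdt, pdx]
  linear_combination ht + hx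

lemma zhalf_succ (α : ℕ) (x t : ℝ) :
    zhalf zb H l (α + 1) x t = zhalf zb H l α x t + hh H l (α + 1) x t := by
  simp only [zhalf, hh, sum_Icc_succ_top (Nat.le_add_left 1 α)]
  ring

lemma zc_succ (α : ℕ) (x t : ℝ) :
    zc zb H l (α + 1) x t = zhalf zb H l α x t + hh H l (α + 1) x t / 2 := by
  rw [zc, zhalf_succ, Nat.add_sub_cancel]
  ring

lemma player_eq_phalf_add (α : ℕ) (x t : ℝ) :
    player H l g N α x t = phalf H l g N α x t + g * hh H l α x t / 2 := by
  rw [player, phalf]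
  ring

lemma phalf_eq_phalf_succ_add {α : ℕ} (hα : α + 1 ≤ N) (x t : ℝ) :
    phalf H l g N α x t = phalf H l g N (α + 1) x t + g * hh H l (α + 1) x t := by
  rw [phalf, phalf, ← add_sum_Ioc_eq_sum_Icc hα, ← Icc_add_one_left_eq_Ioc]
  ring

lemma differentiable_hh (hH : Differentiable ℝ (fun q : ℝ × ℝ => H q.1 q.2)) (α : ℕ) :
    Differentiable ℝ (fun q : ℝ × ℝ => hh H l α q.1 q.2) :=
  hH.const_mul (l α)

lemma differentiable_zhalf (hzb : Differentiable ℝ zb)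
    (hH : Differentiable ℝ (fun q : ℝ × ℝ => H q.1 q.2)) (α : ℕ) :
    Differentiable ℝ (fun q : ℝ × ℝ => zhalf zb H l α q.1 q.2) := by
  unfold zhalf
  fun_prop

lemma differentiable_phalf (hH : Differentiable ℝ (fun q : ℝ × ℝ => H q.1 q.2)) (α : ℕ) :
    Differentiable ℝ (fun q : ℝ × ℝ => phalf H l g N α q.1 q.2) := by
  unfold phalf hh
  fun_prop

end Layers

theorem stmt9_general (N : ℕ) (l : ℕ → ℝ)
    (g : ℝ)
    (zb : ℝ → ℝ) (H : ℝ → ℝ → ℝ)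
    (hzb : ContDiff ℝ (⊤ : ℕ∞) zb)
    (hH : ContDiff ℝ (⊤ : ℕ∞) (fun q : ℝ × ℝ => H q.1 q.2))
    (u : ℕ → ℝ → ℝ → ℝ)
    (hu : ∀ α, ContDiff ℝ (⊤ : ℕ∞) (fun q : ℝ × ℝ => u α q.1 q.2))
    (uhalf : ℕ → ℝ → ℝ → ℝ)
    -- layer momentum equations
    (hmom : ∀ α ∈ Finset.Icc 1 N, ∀ x t : ℝ,
      pdt (fun x' t' => hh H l α x' t' * u α x' t') x t
        + pdx (fun x' t' => hh H l α x' t' * (u α x' t') ^ 2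
            + hh H l α x' t' * player H l g N α x' t') x t
      = uhalf α x t * Gex H l u α x t - uhalf (α - 1) x t * Gex H l u (α - 1) x t
        + phalf H l g N α x t * pdx (zhalf zb H l α) x t
        - phalf H l g N (α - 1) x t * pdx (zhalf zb H l (α - 1)) x t) :
    -- per-layer energy balance
    ∀ α ∈ Finset.Icc 1 N, ∀ x t : ℝ,
      pdt (fun x' t' => hh H l α x' t' * ((u α x' t') ^ 2 / 2 + g * zc zb H l α x' t')) x t
        + pdx (fun x' t' => u α x' t'
            * (hh H l α x' t' * ((u α x' t') ^ 2 / 2 + g * zc zb H l α x' t')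
              + hh H l α x' t' * player H l g N α x' t')) x t
      = (uhalf α x t * u α x t - (u α x t) ^ 2 / 2 + phalf H l g N α x t
            + g * zhalf zb H l α x t) * Gex H l u α x t
        - (uhalf (α - 1) x t * u α x t - (u α x t) ^ 2 / 2 + phalf H l g N (α - 1) x t
            + g * zhalf zb H l (α - 1) x t) * Gex H l u (α - 1) x t
        - phalf H l g N α x t * pdt (zhalf zb H l α) x t
        + phalf H l g N (α - 1) x t * pdt (zhalf zb H l (α - 1)) x t := by
  intro α hα x t
  obtain ⟨β, rfl⟩ := Nat.exists_eq_add_of_le' (mem_Icc.mp hα).1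
  have hzb' := hzb.differentiable (by simp)
  have hH' := hH.differentiable (by simp)
  have hu' := fun j => (hu j).differentiable (by simp)
  have hh' := differentiable_hh (l := l) hH' (β + 1)
  have hz' := differentiable_zhalf (l := l) hzb' hH' β
  have hmass := Gex_succ_sub (l := l) (hH'.differentiableAt_slice_fst x t)
    (hH'.differentiableAt_slice_snd x t) (fun j => (hu' j).differentiableAt_slice_fst x t) β
  have hm := hmom (β + 1) hα x t
  rw [Nat.add_sub_cancel] at hm ⊢
  exact layer_energy_balance (zhalf_succ β) (zc_succ β) (player_eq_phalf_add _)
    (phalf_eq_phalf_succ_add (mem_Icc.mp hα).2)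
    (hh'.differentiableAt_slice_fst x t) (hh'.differentiableAt_slice_snd x t)
    ((hu' _).differentiableAt_slice_fst x t) ((hu' _).differentiableAt_slice_snd x t)
    (hz'.differentiableAt_slice_fst x t) (hz'.differentiableAt_slice_snd x t)
    ((differentiable_phalf hH' _).differentiableAt_slice_fst x t) hmass hm

/-- per-layer energy balance of the layer-averaged Euler system. -/
theorem stmt9 (N : ℕ) (hN : 1 ≤ N) (l : ℕ → ℝ)
    (hl : ∀ j ∈ Finset.Icc 1 N, 0 < l j) (hlsum : ∑ j ∈ Finset.Icc 1 N, l j = 1)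
    (g : ℝ) (hg : 0 < g)
    (zb : ℝ → ℝ) (H : ℝ → ℝ → ℝ)
    (hzb : ContDiff ℝ (⊤ : ℕ∞) zb)
    (hH : ContDiff ℝ (⊤ : ℕ∞) (fun q : ℝ × ℝ => H q.1 q.2))
    (hHpos : ∀ x t : ℝ, 0 < H x t)
    (u : ℕ → ℝ → ℝ → ℝ)
    (hu : ∀ α, ContDiff ℝ (⊤ : ℕ∞) (fun q : ℝ × ℝ => u α q.1 q.2))
    (uhalf : ℕ → ℝ → ℝ → ℝ)
    (huhalf : ∀ α, ContDiff ℝ (⊤ : ℕ∞) (fun q : ℝ × ℝ => uhalf α q.1 q.2))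
    -- total mass equation
    (htot : ∀ x t : ℝ,
      (∑ α ∈ Finset.Icc 1 N, pdt (hh H l α) x t)
        + (∑ α ∈ Finset.Icc 1 N, pdx (fun x' t' => hh H l α x' t' * u α x' t') x t) = 0)
    -- layer momentum equations
    (hmom : ∀ α ∈ Finset.Icc 1 N, ∀ x t : ℝ,
      pdt (fun x' t' => hh H l α x' t' * u α x' t') x t
        + pdx (fun x' t' => hh H l α x' t' * (u α x' t') ^ 2
            + hh H l α x' t' * player H l g N α x' t') x t
      = uhalf α x t * Gex H l u α x t - uhalf (α - 1) x t * Gex H l u (α - 1) x t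
        + phalf H l g N α x t * pdx (zhalf zb H l α) x t
        - phalf H l g N (α - 1) x t * pdx (zhalf zb H l (α - 1)) x t) :
    -- per-layer energy balance
    ∀ α ∈ Finset.Icc 1 N, ∀ x t : ℝ,
      pdt (fun x' t' => hh H l α x' t' * ((u α x' t') ^ 2 / 2 + g * zc zb H l α x' t')) x t
        + pdx (fun x' t' => u α x' t'
            * (hh H l α x' t' * ((u α x' t') ^ 2 / 2 + g * zc zb H l α x' t')
              + hh H l α x' t' * player H l g N α x' t')) x t
      = (uhalf α x t * u α x t - (u α x t) ^ 2 / 2 + phalf H l g N α x t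
            + g * zhalf zb H l α x t) * Gex H l u α x t
        - (uhalf (α - 1) x t * u α x t - (u α x t) ^ 2 / 2 + phalf H l g N (α - 1) x t
            + g * zhalf zb H l (α - 1) x t) * Gex H l u (α - 1) x t
        - phalf H l g N α x t * pdt (zhalf zb H l α) x t
        + phalf H l g N (α - 1) x t * pdt (zhalf zb H l (α - 1)) x t :=
  stmt9_general N l g zb H hzb hH u hu uhalf hmom
end

section
/- Assume the layer-averaged Euler system: the total mass equation Σ_{α=1}^N ∂_t h_α + Σ_{α=1}^N ∂_x(h_α u_α) = 0 and, for each α = 1,…,N, ∂_t(h_α u_α) + ∂_x( h_α u_α² + h_α p_α ) = u_{α+1/2} G_{α+1/2} − u_{α−1/2} G_{α−1/2} + p_{α+1/2} ∂_x z_{α+1/2} − p_{α−1/2} ∂_x z_{α−1/2}, with the upwind interface velocities u_{α+1/2} = u_α if G_{α+1/2} ≤ 0 and u_{α+1/2} = u_{α+1} if G_{α+1/2} > 0 (for 1 ≤ α ≤ N−1). Then the total energy satisfies ∂/∂t Σ_{α=1}^N E_α + ∂/∂x Σ_{α=1}^N u_α( E_α + h_α p_α ) = − (1/2) Σ_{α=1}^{N−1}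 ( u_{α+1} − u_α )² |G_{α+1/2}|, where E_α = h_α( u_α²/2 + g z_α ). -/
/-- Upwind interface velocities `u_{α+1/2} = u_α` if `G_{α+1/2} ≤ 0`, `u_{α+1}` else. -/
noncomputable def uup (H : ℝ → ℝ → ℝ) (l : ℕ → ℝ) (u : ℕ → ℝ → ℝ → ℝ) (α : ℕ) (x t : ℝ) : ℝ :=
  if Gex H l u α x t ≤ 0 then u α x t else u (α + 1) x t


open Finset

section Sums

variable {R : Type*} [CommRing R]

theorem sum_Icc_mul_sub_mul_pred (a b G : ℕ → R) (N : ℕ) :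
    ∑ α ∈ Icc 1 N, (a α * G α - b α * G (α - 1))
      = ∑ α ∈ Icc 1 N, (a α - b (α + 1)) * G α + b (N + 1) * G N - b 1 * G 0 := by
  induction N with
  | zero => simp
  | succ N ih =>
    rw [sum_Icc_succ_top (by omega), ih, sum_Icc_succ_top (by omega), Nat.add_sub_cancel]
    ring

theorem sum_Icc_pred_eq_of_eq_zero (f : ℕ → R) {N : ℕ} (hN : f N = 0) :
    ∑ α ∈ Icc 1 (N - 1), f α = ∑ α ∈ Icc 1 N, f α := by
  cases N with
  | zero => rfl
  | succ N => rw [sum_Icc_succ_top (by omega), hN, add_zero, Nat.add_sub_cancel]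

theorem sum_Icc_eq_sum_Icc_pred_add (l : ℕ → R) {α : ℕ} (hα : 1 ≤ α) :
    ∑ j ∈ Icc 1 α, l j = ∑ j ∈ Icc 1 (α - 1), l j + l α := by
  obtain ⟨β, rfl⟩ : ∃ β, α = β + 1 := ⟨α - 1, by omega⟩
  rw [sum_Icc_succ_top hα, Nat.add_sub_cancel]

theorem sum_Icc_mul_add_pred_eq_sq (l : ℕ → R) (N : ℕ) :
    ∑ α ∈ Icc 1 N, l α * (∑ j ∈ Icc 1 α, l j + ∑ j ∈ Icc 1 (α - 1), l j)
      = (∑ j ∈ Icc 1 N, l j) ^ 2 := by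
  induction N with
  | zero => simp
  | succ N ih =>
    rw [sum_Icc_succ_top (by omega), ih, Nat.add_sub_cancel, sum_Icc_succ_top (by omega)]
    ring

theorem sum_Icc_succ_eq_sub (l : ℕ → R) {α N : ℕ} (hα : α ≤ N) :
    ∑ j ∈ Icc (α + 1) N, l j = ∑ j ∈ Icc 1 N, l j - ∑ j ∈ Icc 1 α, l j := by
  rw [eq_sub_iff_add_eq', Icc_add_one_left_eq_Ioc, ← Nat.zero_add 1, Icc_add_one_left_eq_Ioc,
    Icc_add_one_left_eq_Ioc, sum_Ioc_consecutive l (Nat.zero_le α) hα]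

end Sums

theorem upwind_exchange (a b G : ℝ) :
    ((a - b) * (if G ≤ 0 then a else b) + (b ^ 2 - a ^ 2) / 2) * G
      = -(1 / 2) * ((b - a) ^ 2 * |G|) := by
  split_ifs with hG
  · rw [abs_of_nonpos hG]; ring
  · rw [abs_of_pos (not_le.mp hG)]; ring

theorem sum_Icc_upwind_exchange {N : ℕ} (U G v : ℕ → ℝ) (C : ℝ) (hG0 : G 0 = 0)
    (hGN : G N = 0) (hv : ∀ α, v α = if G α ≤ 0 then U α else U (α + 1)) :
    ∑ α ∈ Icc 1 N, ((U α * v α + (C - U α ^ 2 / 2)) * G α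
        - (U α * v (α - 1) + (C - U α ^ 2 / 2)) * G (α - 1))
      = -(1 / 2) * ∑ α ∈ Icc 1 (N - 1), (U (α + 1) - U α) ^ 2 * |G α| := by
  rw [sum_Icc_mul_sub_mul_pred (fun α => U α * v α + (C - U α ^ 2 / 2))
      (fun α => U α * v (α - 1) + (C - U α ^ 2 / 2)), hG0, hGN, mul_zero, mul_zero, add_zero,
    sub_zero, sum_Icc_pred_eq_of_eq_zero _ (by rw [hGN, abs_zero, mul_zero]), mul_sum]
  refine sum_congr rfl fun α _ => ?_
  rw [Nat.add_sub_cancel, ← upwind_exchange, ← hv]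
  ring

/-- Pointwise balance in one layer: `A, U, B` are the values of `H, u_α, z_b` and `At, Ax, ...`
their derivatives; `L, L₀` are the levels `L_α, L_{α-1}` of the layer's interfaces and `R, R₀` the
fractions of the depth above them; `G, G₀` and `v, v₀` are `G_{α±1/2}` and `u_{α±1/2}`. -/
theorem layer_energy_balance_s10 {l L L₀ R R₀ g A At Ax U Ut Ux B Bx G G₀ v v₀ : ℝ}
    (hL : L = L₀ + l) (hR : R = 1 - L) (hR₀ : R₀ = 1 - L₀)
    (hmass : G - G₀ = l * At + (l * Ax * U + l * A * Ux))
    (hmom : l * At * U + l * A * Ut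
        + (l * (Ax * U ^ 2 + 2 * A * U * Ux) + 2 * l * (g * (l / 2 + R)) * A * Ax)
      = v * G - v₀ * G₀ + g * R * A * (Bx + L * Ax) - g * R₀ * A * (Bx + L₀ * Ax)) :
    l * (At * (U ^ 2 / 2 + g * (B + (L + L₀) / 2 * A)) + A * (U * Ut + g * ((L + L₀) / 2 * At)))
      + (Ux * (l * A * (U ^ 2 / 2 + g * (B + (L + L₀) / 2 * A)) + l * A * (g * (l / 2 + R) * A))
        + U * (l * (Ax * (U ^ 2 / 2 + g * (B + (L + L₀) / 2 * A))
            + A * (U * Ux + g * (Bx + (L + L₀) / 2 * Ax)))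
          + 2 * l * (g * (l / 2 + R)) * A * Ax))
      = (U * v + (g * (B + A) - U ^ 2 / 2)) * G - (U * v₀ + (g * (B + A) - U ^ 2 / 2)) * G₀
        + g * A * At * (l * (L + L₀ - 1)) := by
  subst hR hR₀ hL
  linear_combination U * hmom - (g * (B + A) - U ^ 2 / 2) * hmass

section Slices

variable {h w b : ℝ → ℝ} {h' w' b' s : ℝ}

theorem hasDerivAt_pressure_flux (l P : ℝ) (hh : HasDerivAt h h' s) :
    HasDerivAt (fun s => l * h s * (P * h s)) (2 * l * P * h s * h') s :=
  ((hh.const_mul l).mul (hh.const_mul P)).congr_deriv (by ring)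

theorem hasDerivAt_momentum_flux (l P : ℝ) (hh : HasDerivAt h h' s) (hw : HasDerivAt w w' s) :
    HasDerivAt (fun s => l * h s * w s ^ 2 + l * h s * (P * h s))
      (l * (h' * w s ^ 2 + 2 * h s * w s * w') + 2 * l * P * h s * h') s :=
  (((hh.const_mul l).mul (hw.fun_pow 2)).fun_add (hasDerivAt_pressure_flux l P hh)).congr_deriv
    (by push_cast; ring)

theorem hasDerivAt_energy (l g m : ℝ) (hh : HasDerivAt h h' s) (hw : HasDerivAt w w' s)
    (hb : HasDerivAt b b' s) :
    HasDerivAt (fun s => l * h s * (w s ^ 2 / 2 + g * (b s + m * h s)))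
      (l * (h' * (w s ^ 2 / 2 + g * (b s + m * h s)) + h s * (w s * w' + g * (b' + m * h')))) s :=
  ((hh.const_mul l).mul (((hw.fun_pow 2).div_const 2).fun_add
    ((hb.fun_add (hh.const_mul m)).const_mul g))).congr_deriv (by push_cast; ring)

theorem hasDerivAt_energy_const_bottom (l g m B : ℝ) (hh : HasDerivAt h h' s)
    (hw : HasDerivAt w w' s) :
    HasDerivAt (fun s => l * h s * (w s ^ 2 / 2 + g * (B + m * h s)))
      (l * (h' * (w s ^ 2 / 2 + g * (B + m * h s)) + h s * (w s * w' + g * (m * h')))) s :=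
  (hasDerivAt_energy l g m hh hw (hasDerivAt_const s B)).congr_deriv (by rw [zero_add])

theorem hasDerivAt_energy_flux (l g m P : ℝ) (hh : HasDerivAt h h' s) (hw : HasDerivAt w w' s)
    (hb : HasDerivAt b b' s) :
    HasDerivAt
      (fun s => w s * (l * h s * (w s ^ 2 / 2 + g * (b s + m * h s)) + l * h s * (P * h s)))
      (w' * (l * h s * (w s ^ 2 / 2 + g * (b s + m * h s)) + l * h s * (P * h s))
        + w s * (l * (h' * (w s ^ 2 / 2 + g * (b s + m * h s))
            + h s * (w s * w' + g * (b' + m * h'))) + 2 * l * P * h s * h')) s :=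
  hw.mul ((hasDerivAt_energy l g m hh hw hb).fun_add (hasDerivAt_pressure_flux l P hh))

end Slices

theorem hasDerivAt_pdt {f : ℝ → ℝ → ℝ} (hf : Differentiable ℝ (fun q : ℝ × ℝ => f q.1 q.2))
    (x t : ℝ) : HasDerivAt (fun t' => f x t') (pdt f x t) t :=
  (hf.comp ((differentiable_const x).prodMk differentiable_id) t).hasDerivAt

theorem hasDerivAt_pdx {f : ℝ → ℝ → ℝ} (hf : Differentiable ℝ (fun q : ℝ × ℝ => f q.1 q.2))
    (x t : ℝ) : HasDerivAt (fun x' => f x' t) (pdx f x t) x :=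
  (hf.comp (differentiable_id.prodMk (differentiable_const t)) x).hasDerivAt

section Layers

variable {H : ℝ → ℝ → ℝ} {u : ℕ → ℝ → ℝ → ℝ} {zb : ℝ → ℝ} {l : ℕ → ℝ} {g : ℝ} {N α : ℕ}

theorem zhalf_eq (x t : ℝ) : zhalf zb H l α x t = zb x + (∑ j ∈ Icc 1 α, l j) * H x t := by
  rw [zhalf, sum_mul]

theorem zc_eq (x t : ℝ) :
    zc zb H l α x t = zb x + (∑ j ∈ Icc 1 α, l j + ∑ j ∈ Icc 1 (α - 1), l j) / 2 * H x t := by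
  rw [zc, zhalf_eq, zhalf_eq]
  ring

theorem phalf_eq (x t : ℝ) :
    phalf H l g N α x t = g * (∑ j ∈ Icc (α + 1) N, l j) * H x t := by
  simp only [phalf, hh, ← sum_mul, mul_assoc]

theorem player_eq (x t : ℝ) :
    player H l g N α x t = g * (l α / 2 + ∑ j ∈ Icc (α + 1) N, l j) * H x t := by
  simp only [player, hh, ← sum_mul]
  ring

theorem Gex_zero (x t : ℝ) : Gex H l u 0 x t = 0 := by
  simp [Gex]

variable (hH : Differentiable ℝ (fun q : ℝ × ℝ => H q.1 q.2))
  (hu : ∀ α, Differentiable ℝ (fun q : ℝ × ℝ => u α q.1 q.2))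
include hH

theorem pdt_hh (x t : ℝ) : pdt (hh H l α) x t = l α * pdt H x t :=
  ((hasDerivAt_pdt hH x t).const_mul _).deriv

theorem pdx_zhalf (hzb : Differentiable ℝ zb) (x t : ℝ) :
    pdx (zhalf zb H l α) x t = deriv zb x + (∑ j ∈ Icc 1 α, l j) * pdx H x t := by
  simp only [pdx, zhalf_eq]
  exact ((hzb x).hasDerivAt.fun_add ((hasDerivAt_pdx hH x t).const_mul _)).deriv

include hu

theorem pdt_hh_mul (x t : ℝ) :
    pdt (fun x' t' => hh H l α x' t' * u α x' t') x t
      = l α * pdt H x t * u α x t + l α * H x t * pdt (u α) x t :=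
  (((hasDerivAt_pdt hH x t).const_mul _).mul (hasDerivAt_pdt (hu α) x t)).deriv

theorem pdx_hh_mul (x t : ℝ) :
    pdx (fun x' t' => hh H l α x' t' * u α x' t') x t
      = l α * pdx H x t * u α x t + l α * H x t * pdx (u α) x t :=
  (((hasDerivAt_pdx hH x t).const_mul _).mul (hasDerivAt_pdx (hu α) x t)).deriv

theorem pdx_momentum_flux (x t : ℝ) :
    pdx (fun x' t' => hh H l α x' t' * (u α x' t') ^ 2
        + hh H l α x' t' * player H l g N α x' t') x t
      = l α * (pdx H x t * u α x t ^ 2 + 2 * H x t * u α x t * pdx (u α) x t)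
        + 2 * l α * (g * (l α / 2 + ∑ j ∈ Icc (α + 1) N, l j)) * H x t * pdx H x t := by
  simp only [pdx, hh, player_eq]
  exact (hasDerivAt_momentum_flux _ _ (hasDerivAt_pdx hH x t) (hasDerivAt_pdx (hu α) x t)).deriv

theorem Gex_eq_sum (x t : ℝ) :
    Gex H l u α x t = ∑ j ∈ Icc 1 α,
      (pdt (hh H l j) x t + pdx (fun x' t' => hh H l j x' t' * u j x' t') x t) := by
  rw [Gex, deriv_fun_sum, deriv_fun_sum, sum_add_distrib]
  · rfl
  · exact fun j _ => (((hasDerivAt_pdx hH x t).const_mul _).mul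
      (hasDerivAt_pdx (hu j) x t)).differentiableAt
  · exact fun j _ => ((hasDerivAt_pdt hH x t).const_mul _).differentiableAt

theorem Gex_sub_Gex_pred (hα : 1 ≤ α) (x t : ℝ) :
    Gex H l u α x t - Gex H l u (α - 1) x t
      = l α * pdt H x t + (l α * pdx H x t * u α x t + l α * H x t * pdx (u α) x t) := by
  obtain ⟨β, rfl⟩ : ∃ β, α = β + 1 := ⟨α - 1, by omega⟩
  rw [Gex_eq_sum hH hu, Gex_eq_sum hH hu, Nat.add_sub_cancel, sum_Icc_succ_top hα,
    add_sub_cancel_left, pdt_hh hH, pdx_hh_mul hH hu]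

end Layers

theorem stmt10_general (N : ℕ) (l : ℕ → ℝ)
    (hlsum : ∑ j ∈ Finset.Icc 1 N, l j = 1)
    (g : ℝ)
    (zb : ℝ → ℝ) (H : ℝ → ℝ → ℝ)
    (hzb : ContDiff ℝ (⊤ : ℕ∞) zb)
    (hH : ContDiff ℝ (⊤ : ℕ∞) (fun q : ℝ × ℝ => H q.1 q.2))
    (u : ℕ → ℝ → ℝ → ℝ)
    (hu : ∀ α, ContDiff ℝ (⊤ : ℕ∞) (fun q : ℝ × ℝ => u α q.1 q.2))
    -- total mass equation
    (htot : ∀ x t : ℝ,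
      (∑ α ∈ Finset.Icc 1 N, pdt (hh H l α) x t)
        + (∑ α ∈ Finset.Icc 1 N, pdx (fun x' t' => hh H l α x' t' * u α x' t') x t) = 0)
    -- layer momentum equations with upwind interface velocities
    (hmom : ∀ α ∈ Finset.Icc 1 N, ∀ x t : ℝ,
      pdt (fun x' t' => hh H l α x' t' * u α x' t') x t
        + pdx (fun x' t' => hh H l α x' t' * (u α x' t') ^ 2
            + hh H l α x' t' * player H l g N α x' t') x t
      = uup H l u α x t * Gex H l u α x t - uup H l u (α - 1) x t * Gex H l u (α - 1) x t
        + phalf H l g N α x t * pdx (zhalf zb H l α) x t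
        - phalf H l g N (α - 1) x t * pdx (zhalf zb H l (α - 1)) x t) :
    -- total energy balance
    ∀ x t : ℝ,
      deriv (fun t' => ∑ α ∈ Finset.Icc 1 N,
          hh H l α x t' * ((u α x t') ^ 2 / 2 + g * zc zb H l α x t')) t
        + deriv (fun x' => ∑ α ∈ Finset.Icc 1 N,
            u α x' t * (hh H l α x' t * ((u α x' t) ^ 2 / 2 + g * zc zb H l α x' t)
              + hh H l α x' t * player H l g N α x' t)) x
      = -(1 / 2) * ∑ α ∈ Finset.Icc 1 (N - 1),
          (u (α + 1) x t - u α x t) ^ 2 * |Gex H l u α x t| := by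
  intro x t
  have hzb' : Differentiable ℝ zb := hzb.differentiable (by simp)
  have hH' : Differentiable ℝ (fun q : ℝ × ℝ => H q.1 q.2) := hH.differentiable (by simp)
  have hu' : ∀ α, Differentiable ℝ (fun q : ℝ × ℝ => u α q.1 q.2) :=
    fun α => (hu α).differentiable (by simp)
  have hGN : Gex H l u N x t = 0 := by
    rw [Gex_eq_sum hH' hu', sum_add_distrib]
    exact htot x t
  have hlevel : ∀ α ≤ N, ∑ j ∈ Icc (α + 1) N, l j = 1 - ∑ j ∈ Icc 1 α, l j := fun α hα => by
    rw [sum_Icc_succ_eq_sub l hα, hlsum]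
  have hlevels :
      ∑ α ∈ Icc 1 N, l α * (∑ j ∈ Icc 1 α, l j + ∑ j ∈ Icc 1 (α - 1), l j - 1) = 0 := by
    simp only [mul_sub, mul_one, sum_sub_distrib, sum_Icc_mul_add_pred_eq_sq, hlsum]
    norm_num
  simp only [hh, zc_eq, player_eq]
  rw [(HasDerivAt.fun_sum fun α _ => hasDerivAt_energy_const_bottom (l α) g _ (zb x)
      (hasDerivAt_pdt hH' x t) (hasDerivAt_pdt (hu' α) x t)).deriv,
    (HasDerivAt.fun_sum fun α _ => hasDerivAt_energy_flux (l α) g _ _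
      (hasDerivAt_pdx hH' x t) (hasDerivAt_pdx (hu' α) x t) (hzb' x).hasDerivAt).deriv]
  calc _ = ∑ α ∈ Icc 1 N,
        ((u α x t * uup H l u α x t + (g * (zb x + H x t) - u α x t ^ 2 / 2)) * Gex H l u α x t
          - (u α x t * uup H l u (α - 1) x t + (g * (zb x + H x t) - u α x t ^ 2 / 2))
            * Gex H l u (α - 1) x t
          + g * H x t * pdt H x t
            * (l α * (∑ j ∈ Icc 1 α, l j + ∑ j ∈ Icc 1 (α - 1), l j - 1))) := by
        rw [← sum_add_distrib]
        refine sum_congr rfl fun α hα => ?_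
        obtain ⟨hα1, hαN⟩ := mem_Icc.mp hα
        have hmomα := hmom α hα x t
        rw [pdt_hh_mul hH' hu', pdx_momentum_flux hH' hu', phalf_eq, phalf_eq,
          pdx_zhalf hH' hzb', pdx_zhalf hH' hzb'] at hmomα
        exact layer_energy_balance_s10 (sum_Icc_eq_sum_Icc_pred_add l hα1) (hlevel α hαN)
          (hlevel (α - 1) (by omega)) (Gex_sub_Gex_pred hH' hu' hα1 x t) hmomα
    _ = _ := by
        rw [sum_add_distrib, ← mul_sum, hlevels, mul_zero, add_zero]
        exact sum_Icc_upwind_exchange (fun α => u α x t) (fun α => Gex H l u α x t)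
          (fun α => uup H l u α x t) _ (Gex_zero x t) hGN fun α => rfl

/-- total energy dissipation of the layer-averaged Euler system with
upwind interface velocities. -/
theorem stmt10 (N : ℕ) (hN : 1 ≤ N) (l : ℕ → ℝ)
    (hl : ∀ j ∈ Finset.Icc 1 N, 0 < l j) (hlsum : ∑ j ∈ Finset.Icc 1 N, l j = 1)
    (g : ℝ) (hg : 0 < g)
    (zb : ℝ → ℝ) (H : ℝ → ℝ → ℝ)
    (hzb : ContDiff ℝ (⊤ : ℕ∞) zb)
    (hH : ContDiff ℝ (⊤ : ℕ∞) (fun q : ℝ × ℝ => H q.1 q.2))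
    (hHpos : ∀ x t : ℝ, 0 < H x t)
    (u : ℕ → ℝ → ℝ → ℝ)
    (hu : ∀ α, ContDiff ℝ (⊤ : ℕ∞) (fun q : ℝ × ℝ => u α q.1 q.2))
    -- total mass equation
    (htot : ∀ x t : ℝ,
      (∑ α ∈ Finset.Icc 1 N, pdt (hh H l α) x t)
        + (∑ α ∈ Finset.Icc 1 N, pdx (fun x' t' => hh H l α x' t' * u α x' t') x t) = 0)
    -- layer momentum equations with upwind interface velocities
    (hmom : ∀ α ∈ Finset.Icc 1 N, ∀ x t : ℝ,
      pdt (fun x' t' => hh H l α x' t' * u α x' t') x t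
        + pdx (fun x' t' => hh H l α x' t' * (u α x' t') ^ 2
            + hh H l α x' t' * player H l g N α x' t') x t
      = uup H l u α x t * Gex H l u α x t - uup H l u (α - 1) x t * Gex H l u (α - 1) x t
        + phalf H l g N α x t * pdx (zhalf zb H l α) x t
        - phalf H l g N (α - 1) x t * pdx (zhalf zb H l (α - 1)) x t) :
    -- total energy balance
    ∀ x t : ℝ,
      deriv (fun t' => ∑ α ∈ Finset.Icc 1 N,
          hh H l α x t' * ((u α x t') ^ 2 / 2 + g * zc zb H l α x t')) t
        + deriv (fun x' => ∑ α ∈ Finset.Icc 1 N,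
            u α x' t * (hh H l α x' t * ((u α x' t) ^ 2 / 2 + g * zc zb H l α x' t)
              + hh H l α x' t * player H l g N α x' t)) x
      = -(1 / 2) * ∑ α ∈ Finset.Icc 1 (N - 1),
          (u (α + 1) x t - u α x t) ^ 2 * |Gex H l u α x t| :=
  stmt10_general N l hlsum g zb H hzb hH u hu htot hmom
end
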